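/- Let f be regulated on (a,b), α strictly increasing on (a,b), and suppose (D_α f)(x) exists for all x ∈ (a,b). If (D_α f)(x) > 0 for all x ∈ (a,b), then f^+(x) < f^-(y) for all a < x < y < b. -/

import Mathlib

/-!
Positivity of `D_α f` at `z`, together with `α⁺(z-h) < α⁻(z+h)`, gives the symmetric increase
`f⁺(z-h) < f⁻(z+h)` for all small `h > 0`. Since `f⁺(t) → f⁻(w)` as `t ↑ w` and `f⁻(t) → f⁺(w)`
as `t ↓ w`, letting `h ↓ 0` shows that `f` only jumps up: `f⁻(w) ≤ f⁺(w)`. For `M < f⁺(x)`,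
continuous induction on `[x, y]` applied to the closed set of points lying below every `u > x`
with `f⁻(u) < M` gives `M ≤ f⁻(y)`, hence `f⁺(x) ≤ f⁻(y)`. Strictness comes from inserting one
symmetric step `f⁺(z-h) < f⁻(z+h)` between `x` and `y`.
-/

open Filter Topology Function Set MeasureTheory

/-- `x` lies in the interval `(a, b)` with extended-real endpoints. -/
def MemI (a b : EReal) (x : ℝ) : Prop := a < (x : EReal) ∧ (x : EReal) < b

/-- `f` is regulated on `(a, b)`: both one-sided limits exist (as real numbers)
at every point of `(a, b)`. -/
def RegulatedOn' (f : ℝ → ℝ) (a b : EReal) : Prop :=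
  ∀ x : ℝ, MemI a b x →
    (∃ L : ℝ, Tendsto f (𝓝[<] x) (𝓝 L)) ∧ ∃ R : ℝ, Tendsto f (𝓝[>] x) (𝓝 R)

/-- The symmetric `α`-derivative of `f` at `x` equals `A`:
`(D_α f)(x) = lim_{h↓0} (f⁻(x+h) - f⁺(x-h)) / (α⁻(x+h) - α⁺(x-h))`. -/
def HasDerivAlpha (f α : ℝ → ℝ) (x A : ℝ) : Prop :=
  Tendsto (fun h : ℝ =>
      (leftLim f (x + h) - rightLim f (x - h)) /
        (leftLim α (x + h) - rightLim α (x - h)))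
    (𝓝[>] (0 : ℝ)) (𝓝 A)

/-- The filter of real numbers approaching `b : EReal` from the left (`x ↑ b`). -/
noncomputable def leftFilter (b : EReal) : Filter ℝ := comap (fun x : ℝ => (x : EReal)) (𝓝[<] b)

/-- The filter of real numbers approaching `a : EReal` from the right (`x ↓ a`). -/
noncomputable def rightFilter (a : EReal) : Filter ℝ := comap (fun x : ℝ => (x : EReal)) (𝓝[>] a)

theorem isOpen_setOf_memI (a b : EReal) : IsOpen {x : ℝ | MemI a b x} :=
  isOpen_Ioo.preimage continuous_coe_real_ereal

theorem ordConnected_setOf_memI (a b : EReal) : OrdConnected {x : ℝ | MemI a b x} :=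
  ordConnected_Ioo.preimage_mono fun _ _ h => EReal.coe_le_coe_iff.2 h

theorem Filter.Tendsto.of_forall_mapClusterPt {X Y : Type*} [TopologicalSpace X]
    [TopologicalSpace Y] [RegularSpace Y] {f g : X → Y} {S : Set X} {a : X} {y : Y}
    (hS : IsOpen S) (hf : Tendsto f (𝓝[S] a) (𝓝 y)) (hg : ∀ t, MapClusterPt (g t) (𝓝 t) f) :
    Tendsto g (𝓝[S] a) (𝓝 y) := by
  refine (closed_nhds_basis y).tendsto_right_iff.2 fun V hV => ?_
  have hfV : ∀ᶠ t in 𝓝[S] a, f t ∈ V := (closed_nhds_basis y).tendsto_right_iff.1 hf V hV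
  filter_upwards [eventually_eventually_nhdsWithin.2 hfV, eventually_mem_nhdsWithin] with t ht htS
  exact hV.2.mem_of_mapClusterPt (hg t) (by rwa [hS.nhdsWithin_eq htS] at ht)

section OneSidedLimits

variable {α β : Type*} [LinearOrder α] [TopologicalSpace α] [OrderTopology α]

theorem tendsto_leftLim_nhdsLT [TopologicalSpace β] [RegularSpace β] {f : α → β} {a : α}
    (h : Tendsto f (𝓝[<] a) (𝓝 (leftLim f a))) :
    Tendsto (leftLim f) (𝓝[<] a) (𝓝 (leftLim f a)) :=
  h.of_forall_mapClusterPt isOpen_Iio fun t => (mapClusterPt_leftLim f t).mono nhdsWithin_le_nhds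

theorem tendsto_rightLim_nhdsLT [TopologicalSpace β] [RegularSpace β] {f : α → β} {a : α}
    (h : Tendsto f (𝓝[<] a) (𝓝 (leftLim f a))) :
    Tendsto (rightLim f) (𝓝[<] a) (𝓝 (leftLim f a)) :=
  h.of_forall_mapClusterPt isOpen_Iio fun t => (mapClusterPt_rightLim f t).mono nhdsWithin_le_nhds

theorem tendsto_leftLim_nhdsGT [TopologicalSpace β] [RegularSpace β] {f : α → β} {a : α}
    (h : Tendsto f (𝓝[>] a) (𝓝 (rightLim f a))) :
    Tendsto (leftLim f) (𝓝[>] a) (𝓝 (rightLim f a)) :=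
  h.of_forall_mapClusterPt isOpen_Ioi fun t => (mapClusterPt_leftLim f t).mono nhdsWithin_le_nhds

theorem StrictMonoOn.rightLim_lt_leftLim [DenselyOrdered α] [LinearOrder β] [TopologicalSpace β]
    [OrderClosedTopology β] {f : α → β} {x y : α} (hf : StrictMonoOn f (Icc x y)) (hxy : x < y) :
    rightLim f x < leftLim f y := by
  obtain ⟨m, hxm, hmy⟩ := exists_between hxy
  obtain ⟨m', hmm', hm'y⟩ := exists_between hmy
  have hm : m ∈ Icc x y := ⟨hxm.le, hmy.le⟩
  have hm' : m' ∈ Icc x y := ⟨hxm.le.trans hmm'.le, hm'y.le⟩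
  calc rightLim f x ≤ f m := by
        refine isClosed_Iic.mem_of_mapClusterPt (mapClusterPt_rightLim f x) ?_
        filter_upwards [Ico_mem_nhdsGE hxm] with t ht
        exact hf.monotoneOn ⟨ht.1, ht.2.le.trans hmy.le⟩ hm ht.2.le
    _ < f m' := hf hm hm' hmm'
    _ ≤ leftLim f y := by
        refine isClosed_Ici.mem_of_mapClusterPt (mapClusterPt_leftLim f y) ?_
        filter_upwards [Ioc_mem_nhdsLE hm'y] with t ht
        exact hf.monotoneOn hm' ⟨hxm.le.trans (hmm'.trans ht.1).le, ht.2⟩ ht.1.le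

end OneSidedLimits

theorem RegulatedOn'.tendsto_leftLim {f : ℝ → ℝ} {a b : EReal} (hf : RegulatedOn' f a b) {x : ℝ}
    (hx : MemI a b x) : Tendsto f (𝓝[<] x) (𝓝 (leftLim f x)) :=
  tendsto_leftLim_of_tendsto (hf x hx).1

theorem RegulatedOn'.tendsto_rightLim {f : ℝ → ℝ} {a b : EReal} (hf : RegulatedOn' f a b) {x : ℝ}
    (hx : MemI a b x) : Tendsto f (𝓝[>] x) (𝓝 (rightLim f x)) :=
  tendsto_rightLim_of_tendsto (hf x hx).2

theorem eventually_nhdsGT_iff_eventually_add {t : ℝ} {p : ℝ → Prop} :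
    (∀ᶠ u in 𝓝[>] t, p u) ↔ ∀ᶠ h in 𝓝[>] 0, p (t + h) := by
  have hmap := map_add_left_nhdsGT (c := t) (a := (0 : ℝ))
  rw [add_zero] at hmap
  rw [← hmap, eventually_map]

theorem tendsto_sub_nhdsGT_zero (w : ℝ) : Tendsto (w - ·) (𝓝[>] 0) (𝓝[<] w) := by
  have hmap := map_subLeft_nhdsGT (c := w) (a := (0 : ℝ))
  rw [sub_zero] at hmap
  exact hmap.le

theorem tendsto_add_nhdsGT_zero (w : ℝ) : Tendsto (w + ·) (𝓝[>] 0) (𝓝[>] w) := by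
  have hmap := map_add_left_nhdsGT (c := w) (a := (0 : ℝ))
  rw [add_zero] at hmap
  exact hmap.le

theorem HasDerivAlpha.eventually_rightLim_lt_leftLim {f α : ℝ → ℝ} {U : Set ℝ} {z d : ℝ}
    (hD : HasDerivAlpha f α z d) (hd : 0 < d) (hα : StrictMonoOn α U) (hU : U ∈ 𝓝 z) :
    ∀ᶠ h in 𝓝[>] 0, rightLim f (z - h) < leftLim f (z + h) := by
  obtain ⟨ε, hε, hball⟩ := Metric.mem_nhds_iff.1 hU
  filter_upwards [hD.eventually (eventually_gt_nhds hd), Ioo_mem_nhdsGT hε] with h hq hh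
  have hIcc : Icc (z - h) (z + h) ⊆ U :=
    Real.closedBall_eq_Icc ▸ (Metric.closedBall_subset_ball hh.2).trans hball
  have hden : 0 < leftLim α (z + h) - rightLim α (z - h) :=
    sub_pos.2 <| (hα.mono hIcc).rightLim_lt_leftLim (by linarith [hh.1])
  exact sub_pos.1 ((div_pos_iff_of_pos_right hden).1 hq)

theorem leftLim_le_rightLim_of_eventually_lt {f : ℝ → ℝ} {w : ℝ}
    (hl : Tendsto f (𝓝[<] w) (𝓝 (leftLim f w))) (hr : Tendsto f (𝓝[>] w) (𝓝 (rightLim f w)))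
    (hinc : ∀ᶠ h in 𝓝[>] 0, rightLim f (w - h) < leftLim f (w + h)) :
    leftLim f w ≤ rightLim f w :=
  le_of_tendsto_of_tendsto ((tendsto_rightLim_nhdsLT hl).comp (tendsto_sub_nhdsGT_zero w))
    ((tendsto_leftLim_nhdsGT hr).comp (tendsto_add_nhdsGT_zero w)) (hinc.mono fun _ h => h.le)

section SymmetricIncrease

variable {a b : EReal} {f : ℝ → ℝ}

theorem eventually_le_leftLim_nhdsGT (hf : RegulatedOn' f a b) {x t M : ℝ}
    (hinc : ∀ᶠ h in 𝓝[>] 0, rightLim f (t - h) < leftLim f (t + h))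
    (hx : MemI a b x) (ht : MemI a b t) (hxt : x < t) (hM : ∀ u ∈ Ioo x t, M ≤ leftLim f u) :
    ∀ᶠ u in 𝓝[>] t, M ≤ leftLim f u := by
  rw [eventually_nhdsGT_iff_eventually_add]
  filter_upwards [hinc, Ioo_mem_nhdsGT (sub_pos.2 hxt)] with h hlt hh
  have hth : MemI a b (t - h) :=
    (ordConnected_setOf_memI a b).out hx ht ⟨by linarith [hh.2], by linarith [hh.1]⟩
  refine le_trans ?_ hlt.le
  refine ge_of_tendsto (tendsto_leftLim_nhdsGT (hf.tendsto_rightLim hth)) ?_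
  filter_upwards [Ioo_mem_nhdsGT (sub_lt_self t hh.1)] with u hu
  exact hM u ⟨by linarith [hu.1, hh.2], hu.2⟩

theorem rightLim_le_leftLim_of_forall_eventually_lt (hf : RegulatedOn' f a b)
    (hinc : ∀ z, MemI a b z → ∀ᶠ h in 𝓝[>] 0, rightLim f (z - h) < leftLim f (z + h))
    {x y : ℝ} (hx : MemI a b x) (hy : MemI a b y) (hxy : x < y) :
    rightLim f x ≤ leftLim f y := by
  have hmem : ∀ t ∈ Icc x y, MemI a b t := fun t ht => (ordConnected_setOf_memI a b).out hx hy ht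
  refine le_of_forall_lt_imp_le_of_dense fun M hM => ?_
  -- Phrased through the points where `f⁻ < M`, so that `s` is an intersection of closed rays.
  set s := {t : ℝ | ∀ u, x < u → leftLim f u < M → t ≤ u} with hs_def
  have hs : IsClosed s := by
    simp only [hs_def, ofPred_forall]
    exact isClosed_iInter fun u => isClosed_iInter fun _ => isClosed_iInter fun _ => isClosed_Iic
  have hgood : ∀ t ∈ s, ∀ u ∈ Ioo x t, M ≤ leftLim f u :=
    fun t ht u hu => not_lt.1 fun hbad => (ht u hu.1 hbad).not_gt hu.2
  have hstep : ∀ t ∈ s ∩ Ico x y, s ∈ 𝓝[>] t := by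
    rintro t ⟨hts, htx, hty⟩
    have ht : MemI a b t := hmem t ⟨htx, hty.le⟩
    have hright : ∀ᶠ u in 𝓝[>] t, M ≤ leftLim f u := by
      rcases htx.eq_or_lt with rfl | htx
      · exact ((tendsto_leftLim_nhdsGT (hf.tendsto_rightLim hx)).eventually
          (eventually_gt_nhds hM)).mono fun _ h => h.le
      exact eventually_le_leftLim_nhdsGT hf (hinc t ht) hx ht htx (hgood t hts)
    have hat : x < t → M ≤ leftLim f t := fun htx =>
      ge_of_tendsto (tendsto_leftLim_nhdsLT (hf.tendsto_leftLim ht))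
        (mem_of_superset (Ioo_mem_nhdsLT htx) (hgood t hts))
    obtain ⟨r, htr, hr⟩ := mem_nhdsGT_iff_exists_Ioo_subset.1 hright
    refine mem_nhdsGT_iff_exists_Ioo_subset.2 ⟨r, htr, fun t' ht' u hxu hbad => ?_⟩
    have htu : t ≤ u := hts u hxu hbad
    rcases htu.eq_or_lt with rfl | htu
    · exact absurd (hat hxu) (not_le.2 hbad)
    by_contra! hut'
    exact absurd (hr ⟨htu, hut'.trans ht'.2⟩) (not_le.2 hbad)
  have hys : y ∈ s := (hs.inter isClosed_Icc).Icc_subset_of_forall_mem_nhdsWithin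
    (fun u hxu _ => hxu.le) hstep ⟨hxy.le, le_rfl⟩
  exact ge_of_tendsto (tendsto_leftLim_nhdsLT (hf.tendsto_leftLim hy))
    (mem_of_superset (Ioo_mem_nhdsLT hxy) (hgood y hys))

theorem rightLim_lt_leftLim_of_forall_eventually_lt (hf : RegulatedOn' f a b)
    (hinc : ∀ z, MemI a b z → ∀ᶠ h in 𝓝[>] 0, rightLim f (z - h) < leftLim f (z + h))
    {x y : ℝ} (hx : MemI a b x) (hy : MemI a b y) (hxy : x < y) :
    rightLim f x < leftLim f y := by
  have hmem : ∀ t ∈ Icc x y, MemI a b t := fun t ht => (ordConnected_setOf_memI a b).out hx hy ht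
  have hjump : ∀ t, MemI a b t → leftLim f t ≤ rightLim f t := fun t ht =>
    leftLim_le_rightLim_of_eventually_lt (hf.tendsto_leftLim ht) (hf.tendsto_rightLim ht) (hinc t ht)
  obtain ⟨z, hxz, hzy⟩ := exists_between hxy
  have hz : MemI a b z := hmem z ⟨hxz.le, hzy.le⟩
  obtain ⟨h, hlt, hh0, hh⟩ :=
    ((hinc z hz).and (Ioo_mem_nhdsGT (lt_min (sub_pos.2 hxz) (sub_pos.2 hzy)))).exists
  have hzh : x < z - h ∧ z + h < y := by
    constructor <;> linarith [min_le_left (z - x) (y - z), min_le_right (z - x) (y - z)]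
  have hl : MemI a b (z - h) := hmem _ ⟨hzh.1.le, by linarith⟩
  have hr : MemI a b (z + h) := hmem _ ⟨by linarith, hzh.2.le⟩
  calc rightLim f x ≤ leftLim f (z - h) :=
        rightLim_le_leftLim_of_forall_eventually_lt hf hinc hx hl hzh.1
    _ ≤ rightLim f (z - h) := hjump _ hl
    _ < leftLim f (z + h) := hlt
    _ ≤ rightLim f (z + h) := hjump _ hr
    _ ≤ leftLim f y := rightLim_le_leftLim_of_forall_eventually_lt hf hinc hr hy hzh.2

end SymmetricIncrease

theorem stmt9_general (a b : EReal) (f α : ℝ → ℝ) (D : ℝ → ℝ)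
    (hf : RegulatedOn' f a b) (hα : StrictMonoOn α {x : ℝ | MemI a b x})
    (hD : ∀ x : ℝ, MemI a b x → HasDerivAlpha f α x (D x))
    (hpos : ∀ x : ℝ, MemI a b x → 0 < D x) :
    ∀ x y : ℝ, MemI a b x → MemI a b y → x < y → rightLim f x < leftLim f y :=
  fun _ _ hx hy hxy => rightLim_lt_leftLim_of_forall_eventually_lt hf
    (fun z hz => (hD z hz).eventually_rightLim_lt_leftLim (hpos z hz) hα
      ((isOpen_setOf_memI a b).mem_nhds hz)) hx hy hxy

/-- If `D_α f > 0` on `(a,b)`, then `f⁺(x) < f⁻(y)` for all `a < x < y < b`. -/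
theorem stmt9 (a b : EReal) (hab : a < b) (f α : ℝ → ℝ) (D : ℝ → ℝ)
    (hf : RegulatedOn' f a b) (hα : StrictMonoOn α {x : ℝ | MemI a b x})
    (hD : ∀ x : ℝ, MemI a b x → HasDerivAlpha f α x (D x))
    (hpos : ∀ x : ℝ, MemI a b x → 0 < D x) :
    ∀ x y : ℝ, MemI a b x → MemI a b y → x < y → rightLim f x < leftLim f y :=
  stmt9_general a b f α D hf hα hD hpos
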